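/- Fix n_A*, n_B* ∈ ℕ+, a dustbin score α ∈ ℝ, ε > 0, a fixed matrix S̄* ∈ ℝ^{(n_A*+1)×(n_B*+1)} whose last row and last column are constantly α, and probability vectors p_A, p_B on {1,…,n_A*} and {1,…,n_B*} with strictly positive entries; set K* = exp(S̄*/ε) entrywise. Let ρ : ℕ+ → {1,…,n_A*} and σ : ℕ+ → {1,…,n_B*} be fixed index maps with (1/n_A)·|{k ≤ n_A : ρ(k) = i*}| → p_A(i*) and (1/n_B)·|{l ≤ n_B : σ(l) = j*}| → p_B(j*) for all i*, j*. For each n_A, n_B, let S̄ ∈ ℝ^{(n_A+1)×(n_B+1)} be a random matrix whose last row and last column are constantly α, with S̄_{i,j} = S̄_{i',j'} almost surely whenever ρ(i)=ρ(i') and σ(j)=σ(j'), and S̄_{i,j} → S̄*_{ρ(i),σ(j)} in probability for each fixed (i,j) as n_A, n_B → ∞; set K = exp(S̄/ε). Let a ∈ ℝ^{n_A+1} have entries a_i = 1/n_A (i ≤ n_A), a_{n_A+1} = 1, let b ∈ ℝ^{n_B+1} have entries b_j = 1/n_B (j ≤ n_B), b_{n_B+1} = 1, and let a*, b* be the vectors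 with a*_{i*} = p_A(i*), a*_{n_A*+1} = 1, b*_{j*} = p_B(j*), b*_{n_B*+1} = 1. Run the Sinkhorn iteration initialized at u = a, v = b (respectively u* = a*, v* = b*), where each iteration updates u_i ← a_i/(Kv)_i and then v_j ← b_j/(Kᵀu)_j (respectively with K*, a*, b*). Then for every number L ∈ ℕ of iterations, the resulting vectors u^(L), v^(L) and u*^(L), v*^(L) satisfy: for each fixed i ≤ n_A, n_A·u^(L)_i → p_A(ρ(i))^{-1} u*^(L)_{ρ(i)} in probability; for each fixed j ≤ n_B, n_B·v^(L)_j → p_B(σ(j))^{-1} v*^(L)_{σ(j)} in probability; and u^(L)_{n_A+1} → u*^(L)_{n_A*+1} and v^(L)_{n_B+1} → v*^(L)_{n_B*+1} in probability, as n_A, n_B → ∞ jointly. -/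

import Mathlib

/-!
Almost surely the sampled kernel is constant on the blocks cut out by `ρ` and `σ`, hence so is
every Sinkhorn iterate. Grouping by class, a denominator `∑ⱼ Kᵢⱼ vⱼ` becomes
`∑ₜ (#σ⁻¹(t) / n_B) · K_{i,t} · (n_B v_t) + K_{i,dustbin} · v_dustbin`, a continuous function of
finitely many quantities converging in probability: the class frequencies to `p_B(t)`, the kernel
entries to those of `K*`, and the rescaled iterates by induction on the number of iterations. The
limit denominators are positive, so the continuous mapping theorem carries the convergence
through each half-step; the `v`-update is the `u`-update for the transposed kernel.
-/

open MeasureTheory Filter Finset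

noncomputable section

/-- `X` converges to `Y` in probability (w.r.t. the measure `P`) along the filter `l`. -/
def TendstoInProb {Ω : Type*} [MeasurableSpace Ω] (P : Measure Ω)
    {ι : Type*} (l : Filter ι) {E : Type*} [Dist E]
    (X : ι → Ω → E) (Y : Ω → E) : Prop :=
  ∀ ε : ℝ, 0 < ε → Tendsto (fun n => P {ω | ε < dist (X n ω) (Y ω)}) l (nhds 0)

/-- `L` Sinkhorn iterations for a kernel matrix with rows `0,…,nA` and columns `0,…,nB`
(the indices `nA` and `nB` playing the role of the dustbin row/column), marginals `a`, `b`,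
initialized at `u = a`, `v = b`; each iteration performs `uᵢ ← aᵢ/(Kv)ᵢ` and then
`vⱼ ← bⱼ/(Kᵀu)ⱼ` (with the updated `u`).  Matrices and vectors are modelled as functions
on `ℕ`; only the entries with index `≤ nA` (resp. `≤ nB`) are relevant. -/
def sinkhorn (nA nB : ℕ) (Km : ℕ → ℕ → ℝ) (a b : ℕ → ℝ) : ℕ → (ℕ → ℝ) × (ℕ → ℝ)
  | 0 => (a, b)
  | L + 1 =>
    let uv := sinkhorn nA nB Km a b L
    let u : ℕ → ℝ := fun i => a i / ∑ j ∈ Finset.range (nB + 1), Km i j * uv.2 j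
    let v : ℕ → ℝ := fun j => b j / ∑ i ∈ Finset.range (nA + 1), Km i j * u i
    (u, v)

/-- Uniform marginals with a unit dustbin entry: `aᵢ = 1/n` for `i < n`, and `1` otherwise
(in particular at the dustbin index `n`). -/
def uniformMarginal (n : ℕ) : ℕ → ℝ := fun i => if i < n then (n : ℝ)⁻¹ else 1

/-- Probability marginals with a unit dustbin entry: `aᵢ = p i` for `i < n`, and `1`
otherwise (in particular at the dustbin index `n`). -/
def probMarginal {n : ℕ} (p : Fin n → ℝ) : ℕ → ℝ := fun i =>
  if h : i < n then p ⟨i, h⟩ else 1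

/-- A matrix indexed by `Fin (m+1) × Fin (n+1)`, viewed as a function on `ℕ × ℕ`
(extended by `α`; only the entries with index `≤ m`, `≤ n` are relevant). -/
def extendByDustbin {m n : ℕ} (α : ℝ) (M : Fin (m + 1) → Fin (n + 1) → ℝ) : ℕ → ℕ → ℝ :=
  fun i j =>
    if h : i < m + 1 then (if h' : j < n + 1 then M ⟨i, h⟩ ⟨j, h'⟩ else α) else α

open Topology

section TendstoInProb

variable {Ω : Type*} [MeasurableSpace Ω] {P : Measure Ω} {ι : Type*} {l : Filter ι}

theorem tendstoInProb_const_iff {E : Type*} [PseudoMetricSpace E] {X : ι → Ω → E} {c : E} :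
    TendstoInProb P l X (fun _ => c) ↔
      ∀ U ∈ 𝓝 c, Tendsto (fun n => P {ω | X n ω ∉ U}) l (𝓝 0) := by
  refine ⟨fun h U hU => ?_, fun h e he => ?_⟩
  · obtain ⟨e, he, hball⟩ := Metric.mem_nhds_iff.1 hU
    refine tendsto_of_tendsto_of_tendsto_of_le_of_le tendsto_const_nhds (h (e / 2) (half_pos he))
      (fun _ => zero_le) fun n => measure_mono fun ω hω => ?_
    by_contra hle
    exact hω (hball (Metric.mem_ball.2 (by simp only [Set.mem_ofPred_eq, not_lt] at hle; linarith)))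
  · simpa [Metric.mem_closedBall, not_le] using h _ (Metric.closedBall_mem_nhds c he)

theorem tendstoInProb_of_tendsto {E : Type*} [PseudoMetricSpace E] {x : ι → E} {c : E}
    (hx : Tendsto x l (𝓝 c)) : TendstoInProb P l (fun n _ => x n) (fun _ => c) := by
  refine tendstoInProb_const_iff.2 fun U hU => tendsto_const_nhds.congr' ?_
  filter_upwards [hx hU] with n hn
  simp [Set.mem_preimage.1 hn]

theorem TendstoInProb.congr {E : Type*} [PseudoMetricSpace E] {X X' : ι → Ω → E} {c : E}
    (hX : TendstoInProb P l X (fun _ => c)) (h : ∀ᶠ n in l, X n =ᵐ[P] X' n) :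
    TendstoInProb P l X' (fun _ => c) := by
  refine tendstoInProb_const_iff.2 fun U hU => (tendstoInProb_const_iff.1 hX U hU).congr' ?_
  filter_upwards [h] with n hn
  exact measure_congr (hn.mono fun ω hω => show (X n ω ∉ U) = (X' n ω ∉ U) by rw [hω])

theorem tendstoInProb_of_eventually_eq_const {E : Type*} [PseudoMetricSpace E] {X : ι → Ω → E} {c : E}
    (h : ∀ᶠ n in l, ∀ ω, X n ω = c) : TendstoInProb P l X (fun _ => c) :=
  (tendstoInProb_of_tendsto tendsto_const_nhds).congr
    (h.mono fun _ hn => ae_of_all _ fun ω => (hn ω).symm)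

theorem TendstoInProb.comp {E F : Type*} [PseudoMetricSpace E] [PseudoMetricSpace F]
    {X : ι → Ω → E} {c : E} (hX : TendstoInProb P l X (fun _ => c)) {f : E → F}
    (hf : ContinuousAt f c) : TendstoInProb P l (fun n ω => f (X n ω)) (fun _ => f c) :=
  tendstoInProb_const_iff.2 fun _ hU => tendstoInProb_const_iff.1 hX _ (hf hU)

theorem TendstoInProb.prodMk {E F : Type*} [PseudoMetricSpace E] [PseudoMetricSpace F]
    {X : ι → Ω → E} {Y : ι → Ω → F} {c : E} {d : F}
    (hX : TendstoInProb P l X (fun _ => c)) (hY : TendstoInProb P l Y (fun _ => d)) :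
    TendstoInProb P l (fun n ω => (X n ω, Y n ω)) (fun _ => (c, d)) := by
  refine tendstoInProb_const_iff.2 fun U hU => ?_
  obtain ⟨V, hV, W, hW, hVW⟩ := mem_nhds_prod_iff.1 hU
  refine tendsto_of_tendsto_of_tendsto_of_le_of_le tendsto_const_nhds
    (by simpa using (tendstoInProb_const_iff.1 hX V hV).add (tendstoInProb_const_iff.1 hY W hW))
    (fun _ => zero_le) fun n => (measure_mono fun ω hω => ?_).trans (measure_union_le _ _)
  by_contra h
  simp only [Set.mem_union, Set.mem_ofPred_eq, not_or, not_not] at h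
  exact hω (hVW ⟨h.1, h.2⟩)

variable {X Y : ι → Ω → ℝ} {c d : ℝ}

theorem TendstoInProb.add (hX : TendstoInProb P l X (fun _ => c))
    (hY : TendstoInProb P l Y (fun _ => d)) :
    TendstoInProb P l (fun n ω => X n ω + Y n ω) (fun _ => c + d) :=
  (hX.prodMk hY).comp (f := fun p : ℝ × ℝ => p.1 + p.2) continuous_add.continuousAt

theorem TendstoInProb.mul (hX : TendstoInProb P l X (fun _ => c))
    (hY : TendstoInProb P l Y (fun _ => d)) :
    TendstoInProb P l (fun n ω => X n ω * Y n ω) (fun _ => c * d) :=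
  (hX.prodMk hY).comp (f := fun p : ℝ × ℝ => p.1 * p.2) continuous_mul.continuousAt

theorem TendstoInProb.inv (hX : TendstoInProb P l X (fun _ => c)) (hc : c ≠ 0) :
    TendstoInProb P l (fun n ω => (X n ω)⁻¹) (fun _ => c⁻¹) :=
  hX.comp (continuousAt_inv₀ hc)

theorem tendstoInProb_finset_sum {γ : Type*} (s : Finset γ) {X : γ → ι → Ω → ℝ} {c : γ → ℝ}
    (h : ∀ g ∈ s, TendstoInProb P l (X g) (fun _ => c g)) :
    TendstoInProb P l (fun n ω => ∑ g ∈ s, X g n ω) (fun _ => ∑ g ∈ s, c g) := by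
  classical
  induction s using Finset.induction_on with
  | empty => simpa using tendstoInProb_of_tendsto (P := P) (tendsto_const_nhds (x := (0 : ℝ)))
  | insert a s ha ih =>
    simp only [sum_insert ha]
    exact (h a (mem_insert_self a s)).add (ih fun g hg => h g (mem_insert_of_mem hg))

end TendstoInProb

section Sinkhorn

def halfStep (n : ℕ) (K : ℕ → ℕ → ℝ) (a w : ℕ → ℝ) (i : ℕ) : ℝ :=
  a i / ∑ j ∈ range (n + 1), K i j * w j

theorem halfStep_pos {n : ℕ} {K : ℕ → ℕ → ℝ} {a w : ℕ → ℝ} (hK : ∀ i j, 0 < K i j)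
    (ha : ∀ i, 0 < a i) (hw : ∀ j, 0 < w j) (i : ℕ) : 0 < halfStep n K a w i :=
  div_pos (ha i) (sum_pos (fun j _ => mul_pos (hK i j) (hw j)) nonempty_range_add_one)

theorem sinkhorn_pos {nA nB : ℕ} {K : ℕ → ℕ → ℝ} {a b : ℕ → ℝ} (hK : ∀ i j, 0 < K i j)
    (ha : ∀ i, 0 < a i) (hb : ∀ j, 0 < b j) (L : ℕ) :
    (∀ i, 0 < (sinkhorn nA nB K a b L).1 i) ∧ ∀ j, 0 < (sinkhorn nA nB K a b L).2 j := by
  induction L with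
  | zero => exact ⟨ha, hb⟩
  | succ L ih =>
    have hu : ∀ i, 0 < halfStep nB K a (sinkhorn nA nB K a b L).2 i := halfStep_pos hK ha ih.2
    exact ⟨hu, halfStep_pos (fun j i => hK i j) hb hu⟩

theorem probMarginal_coe {n : ℕ} (p : Fin n → ℝ) (t : Fin n) : probMarginal p t = p t := by
  simp [probMarginal]

theorem probMarginal_self {n : ℕ} (p : Fin n → ℝ) : probMarginal p n = 1 := by
  simp [probMarginal]

theorem probMarginal_pos {n : ℕ} {p : Fin n → ℝ} (hp : ∀ t, 0 < p t) (i : ℕ) :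
    0 < probMarginal p i := by
  unfold probMarginal
  split_ifs
  exacts [hp _, one_pos]

variable {κ κ' : Type*}

def ConstOnFibers (τ : ℕ → κ) (m : ℕ) (f : ℕ → ℝ) : Prop :=
  ∀ i i', i < m → i' < m → τ i = τ i' → f i = f i'

theorem ConstOnFibers.mul {τ : ℕ → κ} {m : ℕ} {f g : ℕ → ℝ} (hf : ConstOnFibers τ m f)
    (hg : ConstOnFibers τ m g) : ConstOnFibers τ m (fun j => f j * g j) :=
  fun i i' hi hi' h => by dsimp only; rw [hf i i' hi hi' h, hg i i' hi hi' h]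

theorem constOnFibers_uniformMarginal (τ : ℕ → κ) (m : ℕ) :
    ConstOnFibers τ m (uniformMarginal m) :=
  fun i i' hi hi' _ => by simp [uniformMarginal, hi, hi']

theorem ConstOnFibers.halfStep {ρ : ℕ → κ} {nA nB : ℕ} {K : ℕ → ℕ → ℝ} {a : ℕ → ℝ}
    (ha : ConstOnFibers ρ nA a) (hK : ∀ j ≤ nB, ConstOnFibers ρ nA (fun i => K i j))
    (w : ℕ → ℝ) : ConstOnFibers ρ nA (halfStep nB K a w) := by
  intro i i' hi hi' h
  simp only [_root_.halfStep, ha i i' hi hi' h]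
  congr 1
  refine sum_congr rfl fun j hj => ?_
  rw [show K i j = K i' j from hK j (mem_range_succ_iff.1 hj) i i' hi hi' h]

def ConstOnBlocks (ρ : ℕ → κ) (nA : ℕ) (σ : ℕ → κ') (nB : ℕ) (K : ℕ → ℕ → ℝ) : Prop :=
  (∀ i ≤ nA, ConstOnFibers σ nB (K i)) ∧ ∀ j ≤ nB, ConstOnFibers ρ nA (fun i => K i j)

namespace ConstOnBlocks

variable {ρ : ℕ → κ} {σ : ℕ → κ'} {nA nB : ℕ} {K : ℕ → ℕ → ℝ}

theorem transpose (h : ConstOnBlocks ρ nA σ nB K) :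
    ConstOnBlocks σ nB ρ nA (fun j i => K i j) :=
  ⟨h.2, h.1⟩

theorem map (h : ConstOnBlocks ρ nA σ nB K) (f : ℝ → ℝ) :
    ConstOnBlocks ρ nA σ nB (fun i j => f (K i j)) :=
  ⟨fun i hi j j' hj hj' hσ => congrArg f (h.1 i hi j j' hj hj' hσ),
    fun j hj i i' hi hi' hρ => congrArg f (h.2 j hj i i' hi hi' hρ)⟩

end ConstOnBlocks

theorem sinkhorn_constOnFibers {ρ : ℕ → κ} {σ : ℕ → κ'} {nA nB : ℕ} {K : ℕ → ℕ → ℝ}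
    {a b : ℕ → ℝ} (hK : ConstOnBlocks ρ nA σ nB K) (ha : ConstOnFibers ρ nA a)
    (hb : ConstOnFibers σ nB b) (L : ℕ) :
    ConstOnFibers ρ nA (sinkhorn nA nB K a b L).1 ∧
      ConstOnFibers σ nB (sinkhorn nA nB K a b L).2 := by
  induction L with
  | zero => exact ⟨ha, hb⟩
  | succ L ih => exact ⟨ha.halfStep hK.2 _, hb.halfStep hK.transpose.2 _⟩

def HasDustbin (β : ℝ) (nA nB : ℕ) (K : ℕ → ℕ → ℝ) : Prop :=
  (∀ j ≤ nB, K nA j = β) ∧ ∀ i ≤ nA, K i nB = β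

namespace HasDustbin

variable {β : ℝ} {nA nB : ℕ} {K : ℕ → ℕ → ℝ}

theorem transpose (h : HasDustbin β nA nB K) : HasDustbin β nB nA (fun j i => K i j) :=
  ⟨h.2, h.1⟩

theorem map (h : HasDustbin β nA nB K) (f : ℝ → ℝ) :
    HasDustbin (f β) nA nB (fun i j => f (K i j)) :=
  ⟨fun j hj => congrArg f (h.1 j hj), fun i hi => congrArg f (h.2 i hi)⟩

theorem constOnBlocks (h : HasDustbin β nA nB K) {ρ : ℕ → κ} {σ : ℕ → κ'}
    (hK : ∀ i i' j j', i < nA → i' < nA → j < nB → j' < nB → ρ i = ρ i' → σ j = σ j' →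
      K i j = K i' j') :
    ConstOnBlocks ρ nA σ nB K := by
  refine ⟨fun i hi j j' hj hj' hσ => ?_, fun j hj i i' hi hi' hρ => ?_⟩
  · rcases hi.lt_or_eq with hi | rfl
    · exact hK i i j j' hi hi hj hj' rfl hσ
    · exact (h.1 j hj.le).trans (h.1 j' hj'.le).symm
  · rcases hj.lt_or_eq with hj | rfl
    · exact hK i i' j j hi hi' hj hj hρ rfl
    · exact (h.2 i hi.le).trans (h.2 i' hi'.le).symm

end HasDustbin

theorem hasDustbin_extendByDustbin {m n : ℕ} {α : ℝ} {M : Fin (m + 1) → Fin (n + 1) → ℝ}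
    (hrow : ∀ j, M (Fin.last m) j = α) (hcol : ∀ i, M i (Fin.last n) = α) :
    HasDustbin α m n (extendByDustbin α M) := by
  refine ⟨fun j hj => ?_, fun i hi => ?_⟩
  · simpa [extendByDustbin, Nat.lt_succ_of_le hj, Fin.last] using hrow ⟨j, Nat.lt_succ_of_le hj⟩
  · simpa [extendByDustbin, Nat.lt_succ_of_le hi, Fin.last] using hcol ⟨i, Nat.lt_succ_of_le hi⟩

theorem extendByDustbin_coe {m n : ℕ} (α : ℝ) (M : Fin (m + 1) → Fin (n + 1) → ℝ)
    (i : Fin m) (j : Fin n) : extendByDustbin α M i j = M i.castSucc j.castSucc := by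
  rw [extendByDustbin, dif_pos (Nat.lt_succ_of_lt i.isLt), dif_pos (Nat.lt_succ_of_lt j.isLt)]
  rfl

theorem sum_range_eq_sum_card_filter_mul [Fintype κ] [DecidableEq κ] {τ : ℕ → κ} {m : ℕ}
    {f : ℕ → ℝ} (hf : ConstOnFibers τ m f) {r : κ → ℕ} (hr : ∀ t, τ (r t) = t)
    (hrm : ∀ t, r t < m) :
    ∑ j ∈ range m, f j = ∑ t, (#{j ∈ range m | τ j = t} : ℝ) * f (r t) := by
  rw [← sum_fiberwise_of_maps_to (g := τ) (t := univ) fun j _ => mem_univ (τ j)]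
  refine sum_congr rfl fun t _ => ?_
  rw [sum_congr rfl fun j hj => ?_, sum_const, nsmul_eq_mul]
  rw [mem_filter, mem_range] at hj
  exact hf j (r t) hj.1 (hrm t) (by rw [hj.2, hr t])

theorem surjective_of_tendsto_card_filter_div [DecidableEq κ] {τ : ℕ → κ} {q : κ → ℝ}
    (hq : ∀ t, q t ≠ 0)
    (hfreq : ∀ t, Tendsto (fun n : ℕ => (#{j ∈ range n | τ j = t} : ℝ) / n) atTop (𝓝 (q t))) :
    Function.Surjective τ := by
  intro t
  by_contra! h
  refine hq t (tendsto_nhds_unique (hfreq t) ?_)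
  simp [filter_false_of_mem fun j _ => h j]

end Sinkhorn

section Tracking

variable {Ω : Type*} [MeasurableSpace Ω] {P : Measure Ω} {ι : Type*} {l : Filter ι}

/-- `X n ω` lives on the samples `0, …, m n - 1` followed by the dustbin `m n`, and `x` on the
classes `0, …, k - 1` followed by the dustbin `k`. -/
def TracksInProb (P : Measure Ω) (l : Filter ι) (m : ι → ℕ) {k : ℕ} (τ : ℕ → Fin k)
    (q : Fin k → ℝ) (X : ι → Ω → ℕ → ℝ) (x : ℕ → ℝ) : Prop :=
  (∀ i, TendstoInProb P l (fun n ω => (m n : ℝ) * X n ω i) (fun _ => (q (τ i))⁻¹ * x (τ i))) ∧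
    TendstoInProb P l (fun n ω => X n ω (m n)) (fun _ => x k)

variable {k k' : ℕ} {m m' : ι → ℕ} {τ : ℕ → Fin k} {τ' : ℕ → Fin k'}
  {q : Fin k → ℝ} {q' : Fin k' → ℝ}

theorem tracksInProb_uniformMarginal (hq : ∀ t, q t ≠ 0) (hm : Tendsto m l atTop) :
    TracksInProb P l m τ q (fun n _ => uniformMarginal (m n)) (probMarginal q) := by
  refine ⟨fun i => ?_, ?_⟩
  · rw [probMarginal_coe, inv_mul_cancel₀ (hq _)]
    refine tendstoInProb_of_eventually_eq_const ?_
    filter_upwards [hm.eventually_gt_atTop i] with n hn ω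
    rw [uniformMarginal, if_pos hn, mul_inv_cancel₀ (Nat.cast_ne_zero.2 (Nat.ne_zero_of_lt hn))]
  · rw [probMarginal_self]
    exact tendstoInProb_of_eventually_eq_const (.of_forall fun n ω => by simp [uniformMarginal])

theorem TracksInProb.tendstoInProb_sum_mul {W : ι → Ω → ℕ → ℝ} {w : ℕ → ℝ}
    (hW : TracksInProb P l m τ q W w) (hq : ∀ t, q t ≠ 0)
    (hfreq : ∀ t, Tendsto (fun n : ℕ => (#{j ∈ range n | τ j = t} : ℝ) / n) atTop (𝓝 (q t)))
    (hm : Tendsto m l atTop) (hWc : ∀ n, ∀ᵐ ω ∂P, ConstOnFibers τ (m n) (W n ω))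
    {g : ι → Ω → ℕ → ℝ} {g' : ℕ → ℝ}
    (hg : ∀ j, TendstoInProb P l (fun n ω => g n ω j) (fun _ => g' (τ j)))
    (hgd : TendstoInProb P l (fun n ω => g n ω (m n)) (fun _ => g' k))
    (hgc : ∀ᶠ n in l, ∀ᵐ ω ∂P, ConstOnFibers τ (m n) (g n ω)) :
    TendstoInProb P l (fun n ω => ∑ j ∈ range (m n + 1), g n ω j * W n ω j)
      (fun _ => ∑ t ∈ range (k + 1), g' t * w t) := by
  obtain ⟨r, hr⟩ : ∃ r : Fin k → ℕ, ∀ t, τ (r t) = t :=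
    (surjective_of_tendsto_card_filter_div hq hfreq).hasRightInverse
  have hlim := (tendstoInProb_finset_sum univ fun t _ =>
    (tendstoInProb_of_tendsto ((hfreq t).comp hm)).mul ((hg (r t)).mul (hW.1 (r t)))).add
      (hgd.mul hW.2)
  simp only [hr] at hlim
  have hlim_eq : ∑ t ∈ range (k + 1), g' t * w t =
      ∑ t : Fin k, q t * (g' t * ((q t)⁻¹ * w t)) + g' k * w k := by
    rw [sum_range_succ, ← Fin.sum_univ_eq_sum_range]
    congr 1
    exact sum_congr rfl fun t _ => by field_simp [hq t]
  rw [hlim_eq]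
  refine hlim.congr ?_
  filter_upwards [hm.eventually_gt_atTop (univ.sup r), hgc] with n hn hgn
  filter_upwards [hWc n, hgn] with ω hWω hgω
  have hrm : ∀ t, r t < m n := fun t => (le_sup (mem_univ t)).trans_lt hn
  have hm0 : (m n : ℝ) ≠ 0 := Nat.cast_ne_zero.2 ((Nat.zero_le _).trans_lt hn).ne'
  rw [sum_range_succ, sum_range_eq_sum_card_filter_mul (hgω.mul hWω) hr hrm]
  congr 1
  exact sum_congr rfl fun t _ => by simp only [Function.comp_apply]; field_simp

theorem TracksInProb.halfStep {W : ι → Ω → ℕ → ℝ} {w : ℕ → ℝ}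
    (hW : TracksInProb P l m τ q W w) (hq : ∀ t, q t ≠ 0)
    (hfreq : ∀ t, Tendsto (fun n : ℕ => (#{j ∈ range n | τ j = t} : ℝ) / n) atTop (𝓝 (q t)))
    (hm : Tendsto m l atTop) (hWc : ∀ n, ∀ᵐ ω ∂P, ConstOnFibers τ (m n) (W n ω))
    (hw : ∀ t, 0 < w t) (hq' : ∀ s, q' s ≠ 0) (hm' : Tendsto m' l atTop)
    {K : ι → Ω → ℕ → ℕ → ℝ} {K' : ℕ → ℕ → ℝ} {β : ℝ}
    (hK : ∀ i j, TendstoInProb P l (fun n ω => K n ω i j) (fun _ => K' (τ' i) (τ j)))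
    (hKd : ∀ n ω, HasDustbin β (m' n) (m n) (K n ω)) (hK'd : HasDustbin β k' k K')
    (hK' : ∀ s t, 0 < K' s t) (hKc : ∀ n, ∀ᵐ ω ∂P, ConstOnBlocks τ' (m' n) τ (m n) (K n ω)) :
    TracksInProb P l m' τ' q'
      (fun n ω => halfStep (m n) (K n ω) (uniformMarginal (m' n)) (W n ω))
      (halfStep k K' (probMarginal q') w) := by
  have hD : ∀ s, ∑ t ∈ range (k + 1), K' s t * w t ≠ 0 := fun s =>
    (sum_pos (fun t _ => mul_pos (hK' s t) (hw t)) nonempty_range_add_one).ne'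
  refine ⟨fun i => ?_, ?_⟩
  · have hsum := hW.tendstoInProb_sum_mul hq hfreq hm hWc (hK i)
      (tendstoInProb_of_eventually_eq_const ((hm'.eventually_ge_atTop i).mono fun n hn ω =>
        ((hKd n ω).2 i hn).trans ((hK'd.2 _ (τ' i).isLt.le)).symm))
      ((hm'.eventually_gt_atTop i).mono fun n hn => (hKc n).mono fun ω h => h.1 i hn.le)
    have hlim : (q' (τ' i))⁻¹ * _root_.halfStep k K' (probMarginal q') w (τ' i) =
        (∑ t ∈ range (k + 1), K' (τ' i) t * w t)⁻¹ := by
      rw [_root_.halfStep, probMarginal_coe, ← mul_div_assoc, inv_mul_cancel₀ (hq' _), one_div]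
    rw [hlim]
    refine (hsum.inv (hD _)).congr ((hm'.eventually_gt_atTop i).mono fun n hn => ?_)
    refine ae_of_all _ fun ω => ?_
    dsimp only
    rw [_root_.halfStep, uniformMarginal, if_pos hn, ← mul_div_assoc,
      mul_inv_cancel₀ (Nat.cast_ne_zero.2 (Nat.ne_zero_of_lt hn)), one_div]
  · have hsum := hW.tendstoInProb_sum_mul hq hfreq hm hWc
      (g := fun n ω => K n ω (m' n)) (g' := K' k')
      (fun j => tendstoInProb_of_eventually_eq_const ((hm.eventually_ge_atTop j).mono fun n hn ω =>
        ((hKd n ω).1 j hn).trans ((hK'd.1 _ (τ j).isLt.le)).symm))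
      (tendstoInProb_of_eventually_eq_const (.of_forall fun n ω =>
        ((hKd n ω).1 _ le_rfl).trans (hK'd.1 k le_rfl).symm))
      (.of_forall fun n => (hKc n).mono fun ω h => h.1 (m' n) le_rfl)
    rw [_root_.halfStep, probMarginal_self, one_div]
    refine (hsum.inv (hD _)).congr (.of_forall fun n => ae_of_all _ fun ω => ?_)
    simp [_root_.halfStep, uniformMarginal]

theorem tracksInProb_sinkhorn (hq : ∀ t, 0 < q t)
    (hfreq : ∀ t, Tendsto (fun n : ℕ => (#{j ∈ range n | τ j = t} : ℝ) / n) atTop (𝓝 (q t)))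
    (hm : Tendsto m l atTop) (hq' : ∀ s, 0 < q' s)
    (hfreq' : ∀ s, Tendsto (fun n : ℕ => (#{i ∈ range n | τ' i = s} : ℝ) / n) atTop (𝓝 (q' s)))
    (hm' : Tendsto m' l atTop)
    {K : ι → Ω → ℕ → ℕ → ℝ} {K' : ℕ → ℕ → ℝ} {β : ℝ}
    (hK : ∀ i j, TendstoInProb P l (fun n ω => K n ω i j) (fun _ => K' (τ' i) (τ j)))
    (hKd : ∀ n ω, HasDustbin β (m' n) (m n) (K n ω)) (hK'd : HasDustbin β k' k K')
    (hK' : ∀ s t, 0 < K' s t) (hKc : ∀ n, ∀ᵐ ω ∂P, ConstOnBlocks τ' (m' n) τ (m n) (K n ω))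
    (L : ℕ) :
    TracksInProb P l m' τ' q'
        (fun n ω => (sinkhorn (m' n) (m n) (K n ω) (uniformMarginal (m' n))
          (uniformMarginal (m n)) L).1)
        (sinkhorn k' k K' (probMarginal q') (probMarginal q) L).1 ∧
      TracksInProb P l m τ q
        (fun n ω => (sinkhorn (m' n) (m n) (K n ω) (uniformMarginal (m' n))
          (uniformMarginal (m n)) L).2)
        (sinkhorn k' k K' (probMarginal q') (probMarginal q) L).2 := by
  have hc : ∀ n, ∀ᵐ ω ∂P, ∀ L,
      ConstOnFibers τ' (m' n) (sinkhorn (m' n) (m n) (K n ω) (uniformMarginal (m' n))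
          (uniformMarginal (m n)) L).1 ∧
        ConstOnFibers τ (m n) (sinkhorn (m' n) (m n) (K n ω) (uniformMarginal (m' n))
          (uniformMarginal (m n)) L).2 := fun n =>
    (hKc n).mono fun ω h => sinkhorn_constOnFibers h (constOnFibers_uniformMarginal _ _)
      (constOnFibers_uniformMarginal _ _)
  have hpos := sinkhorn_pos (nA := k') (nB := k) hK' (probMarginal_pos hq') (probMarginal_pos hq)
  induction L with
  | zero =>
    exact ⟨tracksInProb_uniformMarginal (fun s => (hq' s).ne') hm',
      tracksInProb_uniformMarginal (fun t => (hq t).ne') hm⟩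
  | succ L ih =>
    have hu := ih.2.halfStep (fun t => (hq t).ne') hfreq hm
      (fun n => (hc n).mono fun ω h => (h L).2) (hpos L).2 (fun s => (hq' s).ne') hm' hK hKd hK'd
      hK' hKc
    exact ⟨hu, hu.halfStep (fun s => (hq' s).ne') hfreq' hm'
      (fun n => (hc n).mono fun ω h => (h (L + 1)).1) (hpos (L + 1)).1 (fun t => (hq t).ne') hm
      (fun j i => hK i j) (fun n ω => (hKd n ω).transpose) hK'd.transpose (fun t s => hK' s t)
      (fun n => (hKc n).mono fun ω h => h.transpose)⟩

end Tracking

theorem sinkhorn_iterations_asymptotic_general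
    {Ω : Type*} [MeasurableSpace Ω] (P : Measure Ω)
    (nAs nBs : ℕ)
    (α : ℝ) (ε : ℝ)
    (Sstar : Fin (nAs + 1) → Fin (nBs + 1) → ℝ)
    (hSstar_row : ∀ j, Sstar (Fin.last nAs) j = α)
    (hSstar_col : ∀ i, Sstar i (Fin.last nBs) = α)
    (pA : Fin nAs → ℝ) (pB : Fin nBs → ℝ)
    (hpA_pos : ∀ i, 0 < pA i)
    (hpB_pos : ∀ j, 0 < pB j)
    (ρ : ℕ → Fin nAs) (σ : ℕ → Fin nBs)
    (hρ_card : ∀ istar : Fin nAs,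
      Tendsto (fun nA : ℕ => (((Finset.range nA).filter fun k => ρ k = istar).card : ℝ) / (nA : ℝ))
        atTop (nhds (pA istar)))
    (hσ_card : ∀ jstar : Fin nBs,
      Tendsto (fun nB : ℕ => (((Finset.range nB).filter fun l => σ l = jstar).card : ℝ) / (nB : ℝ))
        atTop (nhds (pB jstar)))
    -- the random augmented score matrices `S nA nB ω : ℕ → ℕ → ℝ`
    -- (rows `0,…,nA`, columns `0,…,nB`, last index = dustbin)
    (S : ℕ → ℕ → Ω → ℕ → ℕ → ℝ)
    (hS_row : ∀ nA nB ω j, j ≤ nB → S nA nB ω nA j = α)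
    (hS_col : ∀ nA nB ω i, i ≤ nA → S nA nB ω i nB = α)
    (hS_grp : ∀ nA nB : ℕ, ∀ᵐ ω ∂P, ∀ i i' j j' : ℕ,
      i < nA → i' < nA → j < nB → j' < nB → ρ i = ρ i' → σ j = σ j' →
      S nA nB ω i j = S nA nB ω i' j')
    (hS_conv : ∀ i j : ℕ,
      TendstoInProb P (atTop : Filter (ℕ × ℕ))
        (fun nAB ω => S nAB.1 nAB.2 ω i j)
        (fun _ => Sstar (ρ i).castSucc (σ j).castSucc)) :
    ∀ L : ℕ,
      (∀ i : ℕ,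
        TendstoInProb P (atTop : Filter (ℕ × ℕ))
          (fun nAB ω => (nAB.1 : ℝ) *
            (sinkhorn nAB.1 nAB.2 (fun i' j' => Real.exp (S nAB.1 nAB.2 ω i' j' / ε))
              (uniformMarginal nAB.1) (uniformMarginal nAB.2) L).1 i)
          (fun _ => (pA (ρ i))⁻¹ *
            (sinkhorn nAs nBs (fun i' j' => Real.exp (extendByDustbin α Sstar i' j' / ε))
              (probMarginal pA) (probMarginal pB) L).1 (ρ i).castSucc)) ∧
      (∀ j : ℕ,
        TendstoInProb P (atTop : Filter (ℕ × ℕ))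
          (fun nAB ω => (nAB.2 : ℝ) *
            (sinkhorn nAB.1 nAB.2 (fun i' j' => Real.exp (S nAB.1 nAB.2 ω i' j' / ε))
              (uniformMarginal nAB.1) (uniformMarginal nAB.2) L).2 j)
          (fun _ => (pB (σ j))⁻¹ *
            (sinkhorn nAs nBs (fun i' j' => Real.exp (extendByDustbin α Sstar i' j' / ε))
              (probMarginal pA) (probMarginal pB) L).2 (σ j).castSucc)) ∧
      TendstoInProb P (atTop : Filter (ℕ × ℕ))
        (fun nAB ω =>
          (sinkhorn nAB.1 nAB.2 (fun i' j' => Real.exp (S nAB.1 nAB.2 ω i' j' / ε))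
            (uniformMarginal nAB.1) (uniformMarginal nAB.2) L).1 nAB.1)
        (fun _ =>
          (sinkhorn nAs nBs (fun i' j' => Real.exp (extendByDustbin α Sstar i' j' / ε))
            (probMarginal pA) (probMarginal pB) L).1 nAs) ∧
      TendstoInProb P (atTop : Filter (ℕ × ℕ))
        (fun nAB ω =>
          (sinkhorn nAB.1 nAB.2 (fun i' j' => Real.exp (S nAB.1 nAB.2 ω i' j' / ε))
            (uniformMarginal nAB.1) (uniformMarginal nAB.2) L).2 nAB.2)
        (fun _ =>
          (sinkhorn nAs nBs (fun i' j' => Real.exp (extendByDustbin α Sstar i' j' / ε))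
            (probMarginal pA) (probMarginal pB) L).2 nBs) := by
  have hfst : Tendsto (fun n : ℕ × ℕ => n.1) atTop atTop :=
    tendsto_atTop_atTop_of_monotone monotone_fst fun b => ⟨(b, 0), le_rfl⟩
  have hsnd : Tendsto (fun n : ℕ × ℕ => n.2) atTop atTop :=
    tendsto_atTop_atTop_of_monotone monotone_snd fun b => ⟨(0, b), le_rfl⟩
  have hK : ∀ i j, TendstoInProb P atTop (fun (n : ℕ × ℕ) ω => Real.exp (S n.1 n.2 ω i j / ε))
      (fun _ => Real.exp (extendByDustbin α Sstar (ρ i) (σ j) / ε)) := fun i j => by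
    rw [extendByDustbin_coe]
    exact (hS_conv i j).comp (f := fun x => Real.exp (x / ε)) (by fun_prop)
  have hSd : ∀ (n : ℕ × ℕ) ω, HasDustbin α n.1 n.2 (S n.1 n.2 ω) := fun n ω =>
    ⟨hS_row n.1 n.2 ω, hS_col n.1 n.2 ω⟩
  intro L
  obtain ⟨hu, hv⟩ := tracksInProb_sinkhorn (m := fun n : ℕ × ℕ => n.2) (m' := fun n => n.1)
    (K := fun n ω i j => Real.exp (S n.1 n.2 ω i j / ε))
    (K' := fun i j => Real.exp (extendByDustbin α Sstar i j / ε))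
    hpB_pos hσ_card hsnd hpA_pos hρ_card hfst hK
    (fun n ω => (hSd n ω).map fun x => Real.exp (x / ε))
    ((hasDustbin_extendByDustbin hSstar_row hSstar_col).map fun x => Real.exp (x / ε))
    (fun _ _ => Real.exp_pos _)
    (fun n => (hS_grp n.1 n.2).mono fun ω h =>
      ((hSd n ω).constOnBlocks h).map fun x => Real.exp (x / ε)) L
  exact ⟨hu.1, hv.1, hu.2, hv.2⟩

/-- every number `L` of Sinkhorn iterations on the sampled problem (uniform
marginals) tracks, asymptotically in probability, the corresponding iterations on the fixed
reweighted problem (probability marginals). -/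
theorem sinkhorn_iterations_asymptotic
    {Ω : Type*} [MeasurableSpace Ω] (P : Measure Ω) [IsProbabilityMeasure P]
    (nAs nBs : ℕ) (hnAs : 0 < nAs) (hnBs : 0 < nBs)
    (α : ℝ) (ε : ℝ) (hε : 0 < ε)
    (Sstar : Fin (nAs + 1) → Fin (nBs + 1) → ℝ)
    (hSstar_row : ∀ j, Sstar (Fin.last nAs) j = α)
    (hSstar_col : ∀ i, Sstar i (Fin.last nBs) = α)
    (pA : Fin nAs → ℝ) (pB : Fin nBs → ℝ)
    (hpA_pos : ∀ i, 0 < pA i) (hpA_sum : ∑ i, pA i = 1)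
    (hpB_pos : ∀ j, 0 < pB j) (hpB_sum : ∑ j, pB j = 1)
    (ρ : ℕ → Fin nAs) (σ : ℕ → Fin nBs)
    (hρ_card : ∀ istar : Fin nAs,
      Tendsto (fun nA : ℕ => (((Finset.range nA).filter fun k => ρ k = istar).card : ℝ) / (nA : ℝ))
        atTop (nhds (pA istar)))
    (hσ_card : ∀ jstar : Fin nBs,
      Tendsto (fun nB : ℕ => (((Finset.range nB).filter fun l => σ l = jstar).card : ℝ) / (nB : ℝ))
        atTop (nhds (pB jstar)))
    -- the random augmented score matrices `S nA nB ω : ℕ → ℕ → ℝ`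
    -- (rows `0,…,nA`, columns `0,…,nB`, last index = dustbin)
    (S : ℕ → ℕ → Ω → ℕ → ℕ → ℝ)
    (hS_row : ∀ nA nB ω j, j ≤ nB → S nA nB ω nA j = α)
    (hS_col : ∀ nA nB ω i, i ≤ nA → S nA nB ω i nB = α)
    (hS_grp : ∀ nA nB : ℕ, ∀ᵐ ω ∂P, ∀ i i' j j' : ℕ,
      i < nA → i' < nA → j < nB → j' < nB → ρ i = ρ i' → σ j = σ j' →
      S nA nB ω i j = S nA nB ω i' j')
    (hS_conv : ∀ i j : ℕ,
      TendstoInProb P (atTop : Filter (ℕ × ℕ))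
        (fun nAB ω => S nAB.1 nAB.2 ω i j)
        (fun _ => Sstar (ρ i).castSucc (σ j).castSucc)) :
    ∀ L : ℕ,
      (∀ i : ℕ,
        TendstoInProb P (atTop : Filter (ℕ × ℕ))
          (fun nAB ω => (nAB.1 : ℝ) *
            (sinkhorn nAB.1 nAB.2 (fun i' j' => Real.exp (S nAB.1 nAB.2 ω i' j' / ε))
              (uniformMarginal nAB.1) (uniformMarginal nAB.2) L).1 i)
          (fun _ => (pA (ρ i))⁻¹ *
            (sinkhorn nAs nBs (fun i' j' => Real.exp (extendByDustbin α Sstar i' j' / ε))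
              (probMarginal pA) (probMarginal pB) L).1 (ρ i).castSucc)) ∧
      (∀ j : ℕ,
        TendstoInProb P (atTop : Filter (ℕ × ℕ))
          (fun nAB ω => (nAB.2 : ℝ) *
            (sinkhorn nAB.1 nAB.2 (fun i' j' => Real.exp (S nAB.1 nAB.2 ω i' j' / ε))
              (uniformMarginal nAB.1) (uniformMarginal nAB.2) L).2 j)
          (fun _ => (pB (σ j))⁻¹ *
            (sinkhorn nAs nBs (fun i' j' => Real.exp (extendByDustbin α Sstar i' j' / ε))
              (probMarginal pA) (probMarginal pB) L).2 (σ j).castSucc)) ∧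
      TendstoInProb P (atTop : Filter (ℕ × ℕ))
        (fun nAB ω =>
          (sinkhorn nAB.1 nAB.2 (fun i' j' => Real.exp (S nAB.1 nAB.2 ω i' j' / ε))
            (uniformMarginal nAB.1) (uniformMarginal nAB.2) L).1 nAB.1)
        (fun _ =>
          (sinkhorn nAs nBs (fun i' j' => Real.exp (extendByDustbin α Sstar i' j' / ε))
            (probMarginal pA) (probMarginal pB) L).1 nAs) ∧
      TendstoInProb P (atTop : Filter (ℕ × ℕ))
        (fun nAB ω =>
          (sinkhorn nAB.1 nAB.2 (fun i' j' => Real.exp (S nAB.1 nAB.2 ω i' j' / ε))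
            (uniformMarginal nAB.1) (uniformMarginal nAB.2) L).2 nAB.2)
        (fun _ =>
          (sinkhorn nAs nBs (fun i' j' => Real.exp (extendByDustbin α Sstar i' j' / ε))
            (probMarginal pA) (probMarginal pB) L).2 nBs) :=
  sinkhorn_iterations_asymptotic_general P nAs nBs α ε Sstar hSstar_row hSstar_col pA pB hpA_pos
    hpB_pos ρ σ hρ_card hσ_card S hS_row hS_col hS_grp hS_conv

end
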